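/- Let P be a transition function, r : 𝒮 × 𝒜 → ℝ a reward vector, and λ > 0. Then strong duality holds for the regularized reinforcement learning problem: max_{d ∈ C(P)} ( Σ_{s,a} r(s,a) d(s,a) − (λ/2)‖d‖₂² ) = min_{h : 𝒮 → ℝ} max_{d ≥ 0} L_{r,P,λ}(d,h), and both the maximum on the left and the minimum on the right are attained. -/

import Mathlib

noncomputable section

open scoped BigOperators

def IsTransition {S A : Type*} [Fintype S] [Fintype A]
    (P : EuclideanSpace ℝ (S × A × S)) : Prop :=
  (∀ s a s', 0 ≤ P (s, a, s')) ∧ ∀ s a, (∑ s', P (s, a, s')) = 1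

def Feasible {S A : Type*} [Fintype S] [Fintype A] (γ : ℝ) (ρ : S → ℝ)
    (P : EuclideanSpace ℝ (S × A × S)) (d : EuclideanSpace ℝ (S × A)) : Prop :=
  (∀ s a, 0 ≤ d (s, a)) ∧
  ∀ s : S, (∑ a, d (s, a)) = ρ s + γ * ∑ s', ∑ a, d (s', a) * P (s', a, s)

/-- The regularized objective `∑_{s,a} r(s,a) d(s,a) − (λ/2) ‖d‖₂²`. -/
def RegObj {S A : Type*} [Fintype S] [Fintype A] (lam : ℝ)
    (r d : EuclideanSpace ℝ (S × A)) : ℝ :=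
  (∑ p : S × A, r p * d p) - lam / 2 * ‖d‖ ^ 2

/-- The Lagrangian `L_{r,P,λ}(d,h)` of the regularized RL problem. -/
def Lag {S A : Type*} [Fintype S] [Fintype A] (γ : ℝ) (ρ : S → ℝ)
    (r : EuclideanSpace ℝ (S × A)) (P : EuclideanSpace ℝ (S × A × S)) (lam : ℝ)
    (d : EuclideanSpace ℝ (S × A)) (h : EuclideanSpace ℝ S) : ℝ :=
  (∑ p : S × A, r p * d p) - lam / 2 * ‖d‖ ^ 2 +
    ∑ s, h s * (ρ s + γ * (∑ s', ∑ a, d (s', a) * P (s', a, s)) - ∑ a, d (s, a))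

/-- The dual function `h ↦ max_{d ≥ 0} L_{r,P,λ}(d,h)`. -/
def DualFn {S A : Type*} [Fintype S] [Fintype A] (γ : ℝ) (ρ : S → ℝ)
    (r : EuclideanSpace ℝ (S × A)) (P : EuclideanSpace ℝ (S × A × S)) (lam : ℝ)
    (h : EuclideanSpace ℝ S) : ℝ :=
  ⨆ d : {d : EuclideanSpace ℝ (S × A) // ∀ p, 0 ≤ d p}, Lag γ ρ r P lam d.1 h

/-!
Strong duality is certified by a KKT pair. A primal maximizer `d*` exists because `C(P)` is
compact and contains the occupancy measure of any deterministic policy. For the shifted reward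
`r' = r - λ d*`, the fixed point `h*` of the `γ`-contracting Bellman optimality operator has
nonpositive advantages `r' + γ P h* - h*`, vanishing along a greedy policy `π`. On `C(P)` the
pairing with these advantages equals `⟨r', d⟩ - ⟨h*, ρ⟩`; it is `0` at the occupancy measure of
`π`, so the first-order optimality of `d*` forces it to vanish at `d*` too. These are the KKT
conditions for maximizing the concave `L(·, h*)` over `d ≥ 0`, so the dual function at `h*`
equals the primal optimum, and weak duality makes `h*` a dual minimizer.
-/

open scoped RealInnerProductSpace

section ConcaveQuadratic
variable {E : Type*} [NormedAddCommGroup E] [InnerProductSpace ℝ E]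

theorem inner_sub_mul_norm_sq_le {lam : ℝ} (hlam : 0 < lam) (c x : E) :
    ⟪c, x⟫ - lam / 2 * ‖x‖ ^ 2 ≤ ‖c‖ ^ 2 / (2 * lam) := by
  have key := sq_nonneg ‖c - lam • x‖
  rw [norm_sub_sq_real, inner_smul_right, norm_smul, Real.norm_of_nonneg hlam.le] at key
  rw [le_div_iff₀ (by positivity)]
  nlinarith

theorem inner_sub_mul_norm_sq_le_tangent {lam : ℝ} (hlam : 0 ≤ lam) (c x y : E) :
    ⟪c, y⟫ - lam / 2 * ‖y‖ ^ 2 ≤ ⟪c, x⟫ - lam / 2 * ‖x‖ ^ 2 + ⟪c - lam • x, y - x⟫ := by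
  have key : 0 ≤ lam / 2 * ‖y - x‖ ^ 2 := by positivity
  rw [norm_sub_sq_real, real_inner_comm] at key
  simp only [inner_sub_left, inner_sub_right, inner_smul_left, real_inner_self_eq_norm_sq,
    RCLike.conj_to_real]
  nlinarith

theorem inner_sub_smul_nonpos_of_isMaxOn {lam : ℝ} {c x y : E} {C : Set E} (hC : Convex ℝ C)
    (hmax : IsMaxOn (fun z => ⟪c, z⟫ - lam / 2 * ‖z‖ ^ 2) C x) (hx : x ∈ C) (hy : y ∈ C) :
    ⟪c - lam • x, y - x⟫ ≤ 0 := by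
  have hderiv : HasFDerivAt (fun z => ⟪c, z⟫ - lam / 2 * ‖z‖ ^ 2)
      (innerSL ℝ c - (lam / 2) • (2 • innerSL ℝ x)) x :=
    (innerSL ℝ c).hasFDerivAt.sub ((hasStrictFDerivAt_norm_sq x).hasFDerivAt.const_mul _)
  have := hmax.localize.hasFDerivWithinAt_nonpos hderiv.hasFDerivWithinAt
    (sub_mem_posTangentConeAt_of_segment_subset (hC.segment_subset hx hy))
  convert this using 1
  simp [inner_sub_left, inner_smul_left]
  ring

end ConcaveQuadratic

section EuclideanSpace
variable {ι : Type*} [Fintype ι]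

theorem real_inner_eq_sum_mul (x y : EuclideanSpace ℝ ι) : ⟪x, y⟫ = ∑ i, x i * y i := by
  simp [PiLp.inner_apply, mul_comm]

theorem real_inner_nonpos_of_nonpos_of_nonneg {v d : EuclideanSpace ℝ ι} (hv : ∀ i, v i ≤ 0)
    (hd : ∀ i, 0 ≤ d i) : ⟪v, d⟫ ≤ 0 := by
  rw [real_inner_eq_sum_mul]
  exact Finset.sum_nonpos fun i _ => mul_nonpos_of_nonpos_of_nonneg (hv i) (hd i)

end EuclideanSpace

section Lagrangian
variable {S A : Type*} [Fintype S]

def advantage (γ : ℝ) (P : EuclideanSpace ℝ (S × A × S)) (r : EuclideanSpace ℝ (S × A))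
    (h : EuclideanSpace ℝ S) : EuclideanSpace ℝ (S × A) :=
  WithLp.toLp 2 fun p => r p + γ * ∑ s', P (p.1, p.2, s') * h s' - h p.1

theorem advantage_sub_smul (γ : ℝ) (P : EuclideanSpace ℝ (S × A × S))
    (r d : EuclideanSpace ℝ (S × A)) (lam : ℝ) (h : EuclideanSpace ℝ S) :
    advantage γ P (r - lam • d) h = advantage γ P r h - lam • d := by
  ext p
  simp only [advantage, PiLp.sub_apply, PiLp.smul_apply, smul_eq_mul]
  ring

variable [Fintype A]

theorem regObj_eq_inner (lam : ℝ) (r d : EuclideanSpace ℝ (S × A)) :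
    RegObj lam r d = ⟪r, d⟫ - lam / 2 * ‖d‖ ^ 2 := by
  rw [RegObj, real_inner_eq_sum_mul]

theorem lag_eq_inner_advantage (γ : ℝ) (ρ : S → ℝ) (r : EuclideanSpace ℝ (S × A))
    (P : EuclideanSpace ℝ (S × A × S)) (lam : ℝ) (d : EuclideanSpace ℝ (S × A))
    (h : EuclideanSpace ℝ S) :
    Lag γ ρ r P lam d h = ⟪advantage γ P r h, d⟫ - lam / 2 * ‖d‖ ^ 2 + ∑ s, h s * ρ s := by
  have flow : ∑ s, h s * (γ * ∑ s', ∑ a, d (s', a) * P (s', a, s))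
      = ∑ s', ∑ a, γ * (∑ s, P (s', a, s) * h s) * d (s', a) := by
    simp only [Finset.mul_sum]
    rw [Finset.sum_comm]
    refine Finset.sum_congr rfl fun s' _ => ?_
    rw [Finset.sum_comm]
    simp only [Finset.sum_mul]
    exact Finset.sum_congr rfl fun a _ => Finset.sum_congr rfl fun s _ => by ring
  simp only [Lag, mul_sub, mul_add, Finset.sum_add_distrib, Finset.sum_sub_distrib, flow]
  simp only [real_inner_eq_sum_mul, advantage, Fintype.sum_prod_type, sub_mul, add_mul,
    Finset.mul_sum, Finset.sum_add_distrib, Finset.sum_sub_distrib]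
  ring

theorem lag_of_feasible {γ : ℝ} {ρ : S → ℝ} {P : EuclideanSpace ℝ (S × A × S)}
    (r : EuclideanSpace ℝ (S × A)) (lam : ℝ) {d : EuclideanSpace ℝ (S × A)}
    (hd : Feasible γ ρ P d) (h : EuclideanSpace ℝ S) :
    Lag γ ρ r P lam d h = RegObj lam r d := by
  simp [Lag, RegObj, hd.2]

theorem inner_advantage_of_feasible {γ : ℝ} {ρ : S → ℝ} {P : EuclideanSpace ℝ (S × A × S)}
    (r : EuclideanSpace ℝ (S × A)) {d : EuclideanSpace ℝ (S × A)} (hd : Feasible γ ρ P d)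
    (h : EuclideanSpace ℝ S) :
    ⟪advantage γ P r h, d⟫ = ⟪r, d⟫ - ∑ s, h s * ρ s := by
  have := lag_eq_inner_advantage γ ρ r P 0 d h
  rw [lag_of_feasible r 0 hd, regObj_eq_inner] at this
  linarith

theorem bddAbove_range_lag (γ : ℝ) (ρ : S → ℝ) (r : EuclideanSpace ℝ (S × A))
    (P : EuclideanSpace ℝ (S × A × S)) {lam : ℝ} (hlam : 0 < lam) (h : EuclideanSpace ℝ S) :
    BddAbove (Set.range fun d : {d : EuclideanSpace ℝ (S × A) // ∀ p, 0 ≤ d p} =>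
      Lag γ ρ r P lam d.1 h) := by
  refine ⟨‖advantage γ P r h‖ ^ 2 / (2 * lam) + ∑ s, h s * ρ s, ?_⟩
  rintro _ ⟨d, rfl⟩
  dsimp only
  rw [lag_eq_inner_advantage]
  gcongr
  exact inner_sub_mul_norm_sq_le hlam _ _

theorem regObj_le_dualFn {γ : ℝ} {ρ : S → ℝ} {P : EuclideanSpace ℝ (S × A × S)}
    (r : EuclideanSpace ℝ (S × A)) {lam : ℝ} (hlam : 0 < lam) {d : EuclideanSpace ℝ (S × A)}
    (hd : Feasible γ ρ P d) (h : EuclideanSpace ℝ S) :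
    RegObj lam r d ≤ DualFn γ ρ r P lam h := by
  rw [← lag_of_feasible r lam hd h]
  exact le_ciSup (bddAbove_range_lag γ ρ r P hlam h) ⟨d, fun p => hd.1 p.1 p.2⟩

/-- `hadv` and `hslack` are the KKT conditions of `max_{d ≥ 0} Lag d h` at `d`. -/
theorem dualFn_le_lag (γ : ℝ) (ρ : S → ℝ) (r : EuclideanSpace ℝ (S × A))
    (P : EuclideanSpace ℝ (S × A × S)) {lam : ℝ} (hlam : 0 ≤ lam) {d : EuclideanSpace ℝ (S × A)}
    {h : EuclideanSpace ℝ S}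
    (hadv : ∀ p, advantage γ P (r - lam • d) h p ≤ 0)
    (hslack : ⟪advantage γ P (r - lam • d) h, d⟫ = 0) :
    DualFn γ ρ r P lam h ≤ Lag γ ρ r P lam d h := by
  have : Nonempty {d : EuclideanSpace ℝ (S × A) // ∀ p, 0 ≤ d p} := ⟨⟨0, fun _ => le_rfl⟩⟩
  refine ciSup_le fun d' => ?_
  have htangent := inner_sub_mul_norm_sq_le_tangent hlam (advantage γ P r h) d d'
  rw [← advantage_sub_smul, inner_sub_right, hslack, sub_zero] at htangent
  have := real_inner_nonpos_of_nonpos_of_nonneg hadv d'.2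
  rw [lag_eq_inner_advantage, lag_eq_inner_advantage]
  linarith

theorem convex_setOf_feasible (γ : ℝ) (ρ : S → ℝ) (P : EuclideanSpace ℝ (S × A × S)) :
    Convex ℝ {d : EuclideanSpace ℝ (S × A) | Feasible γ ρ P d} := by
  intro x hx y hy a b ha hb hab
  refine ⟨fun s a' => ?_, fun s => ?_⟩
  · simp only [PiLp.add_apply, PiLp.smul_apply, smul_eq_mul]
    have := hx.1 s a'; have := hy.1 s a'
    positivity
  · simp only [PiLp.add_apply, PiLp.smul_apply, smul_eq_mul, add_mul, Finset.sum_add_distrib,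
      mul_assoc, ← Finset.mul_sum]
    linear_combination a * hx.2 s + b * hy.2 s + ρ s * hab

theorem inner_advantage_eq_zero_of_isMaxOn {γ : ℝ} {ρ : S → ℝ}
    {P : EuclideanSpace ℝ (S × A × S)} {r : EuclideanSpace ℝ (S × A)} {lam : ℝ}
    {dstar dg : EuclideanSpace ℝ (S × A)} {h : EuclideanSpace ℝ S}
    (hmax : IsMaxOn (RegObj lam r) {d | Feasible γ ρ P d} dstar)
    (hdstar : Feasible γ ρ P dstar) (hdg : Feasible γ ρ P dg)
    (hadv : ∀ p, advantage γ P (r - lam • dstar) h p ≤ 0)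
    (hg : ⟪advantage γ P (r - lam • dstar) h, dg⟫ = 0) :
    ⟪advantage γ P (r - lam • dstar) h, dstar⟫ = 0 := by
  have hfirst : ⟪r - lam • dstar, dg - dstar⟫ ≤ 0 :=
    inner_sub_smul_nonpos_of_isMaxOn (convex_setOf_feasible γ ρ P)
      (by simpa only [funext (regObj_eq_inner lam r)] using hmax) hdstar hdg
  have hnonpos := real_inner_nonpos_of_nonpos_of_nonneg hadv fun p => hdstar.1 p.1 p.2
  rw [inner_advantage_of_feasible _ hdg] at hg
  rw [inner_advantage_of_feasible _ hdstar] at hnonpos ⊢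
  rw [inner_sub_right] at hfirst
  linarith

end Lagrangian

section Bellman
variable {S A : Type*} [Fintype S] [Fintype A] {γ : ℝ} {P : EuclideanSpace ℝ (S × A × S)}

def qValue (γ : ℝ) (P : EuclideanSpace ℝ (S × A × S)) (r : EuclideanSpace ℝ (S × A))
    (h : S → ℝ) (s : S) (a : A) : ℝ :=
  r (s, a) + γ * ∑ s', P (s, a, s') * h s'

theorem qValue_le_add_dist (hγ0 : 0 ≤ γ) (hP : IsTransition P) (r : EuclideanSpace ℝ (S × A))
    (h h' : S → ℝ) (s : S) (a : A) :
    qValue γ P r h s a ≤ qValue γ P r h' s a + γ * dist h h' := by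
  have hmean : ∑ s', P (s, a, s') * h s' ≤ ∑ s', P (s, a, s') * h' s' + dist h h' :=
    calc ∑ s', P (s, a, s') * h s' ≤ ∑ s', P (s, a, s') * (h' s' + dist h h') := by
          gcongr with s'
          · exact hP.1 s a s'
          · have := dist_le_pi_dist h h' s'
            rw [Real.dist_eq] at this
            linarith [le_abs_self (h s' - h' s')]
      _ = ∑ s', P (s, a, s') * h' s' + dist h h' := by
          simp only [mul_add, Finset.sum_add_distrib, ← Finset.sum_mul, hP.2 s a, one_mul]
  have := mul_le_mul_of_nonneg_left hmean hγ0
  simp only [qValue]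
  linarith

variable [Nonempty A]

-- On `S → ℝ` rather than `EuclideanSpace ℝ S`: `bellman` contracts for the sup distance.
def bellman (γ : ℝ) (P : EuclideanSpace ℝ (S × A × S)) (r : EuclideanSpace ℝ (S × A))
    (h : S → ℝ) : S → ℝ :=
  fun s => Finset.univ.sup' Finset.univ_nonempty (qValue γ P r h s)

theorem bellman_le_add_dist (hγ0 : 0 ≤ γ) (hP : IsTransition P) (r : EuclideanSpace ℝ (S × A))
    (h h' : S → ℝ) (s : S) :
    bellman γ P r h s ≤ bellman γ P r h' s + γ * dist h h' :=
  Finset.sup'_le _ _ fun a _ => (qValue_le_add_dist hγ0 hP r h h' s a).trans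
    (add_le_add_left (Finset.le_sup' (qValue γ P r h' s) (Finset.mem_univ a)) _)

theorem contractingWith_bellman (hγ0 : 0 ≤ γ) (hγ1 : γ < 1) (hP : IsTransition P)
    (r : EuclideanSpace ℝ (S × A)) : ContractingWith ⟨γ, hγ0⟩ (bellman γ P r) := by
  refine ⟨hγ1, LipschitzWith.of_dist_le_mul fun h h' =>
    (dist_pi_le_iff (by positivity)).2 fun s => ?_⟩
  change _ ≤ γ * dist h h'
  rw [Real.dist_eq, abs_sub_le_iff]
  constructor
  · linarith [bellman_le_add_dist hγ0 hP r h h' s]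
  · linarith [dist_comm h' h ▸ bellman_le_add_dist hγ0 hP r h' h s]

theorem exists_advantage_nonpos_and_greedy (hγ0 : 0 ≤ γ) (hγ1 : γ < 1) (hP : IsTransition P)
    (r : EuclideanSpace ℝ (S × A)) :
    ∃ h : EuclideanSpace ℝ S, (∀ p, advantage γ P r h p ≤ 0) ∧
      ∃ π : S → A, ∀ s, advantage γ P r h (s, π s) = 0 := by
  have hT := contractingWith_bellman hγ0 hγ1 hP r
  set h := hT.fixedPoint (bellman γ P r)
  have hfix : ∀ s, bellman γ P r h s = h s := congrFun hT.fixedPoint_isFixedPt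
  have hadv : ∀ p : S × A, advantage γ P r (WithLp.toLp 2 h) p = qValue γ P r h p.1 p.2 - h p.1 :=
    fun _ => rfl
  choose π hπ using fun s => Finset.exists_mem_eq_sup' Finset.univ_nonempty (qValue γ P r h s)
  refine ⟨WithLp.toLp 2 h, fun p => ?_, π, fun s => ?_⟩
  · rw [hadv, sub_nonpos, ← hfix]
    exact Finset.le_sup' _ (Finset.mem_univ p.2)
  · rw [hadv, sub_eq_zero, ← hfix, bellman, (hπ s).2]

end Bellman

section Occupancy
variable {S A : Type*} [Fintype S] {γ : ℝ} {ρ : S → ℝ} {P : EuclideanSpace ℝ (S × A × S)}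
  {π : S → A}

/-- `discountedStateDist γ ρ P π n s = γ ^ n * Pr(s_n = s)` when following `π` from `s_0 ∼ ρ`. -/
def discountedStateDist (γ : ℝ) (ρ : S → ℝ) (P : EuclideanSpace ℝ (S × A × S)) (π : S → A) :
    ℕ → S → ℝ
  | 0 => ρ
  | n + 1 => fun s => γ * ∑ s', discountedStateDist γ ρ P π n s' * P (s', π s', s)

variable [Fintype A]

theorem discountedStateDist_nonneg (hγ0 : 0 ≤ γ) (hρ0 : ∀ s, 0 ≤ ρ s) (hP : IsTransition P)
    (n : ℕ) (s : S) : 0 ≤ discountedStateDist γ ρ P π n s := by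
  induction n generalizing s with
  | zero => exact hρ0 s
  | succ n ih =>
    exact mul_nonneg hγ0 (Finset.sum_nonneg fun s' _ => mul_nonneg (ih s') (hP.1 _ _ _))

theorem sum_discountedStateDist (hP : IsTransition P) (n : ℕ) :
    ∑ s, discountedStateDist γ ρ P π n s = γ ^ n * ∑ s, ρ s := by
  induction n with
  | zero => simp [discountedStateDist]
  | succ n ih =>
    simp only [discountedStateDist, ← Finset.mul_sum]
    rw [Finset.sum_comm]
    simp only [← Finset.mul_sum, hP.2, mul_one, ih]
    ring

theorem summable_discountedStateDist (hγ0 : 0 ≤ γ) (hγ1 : γ < 1) (hρ0 : ∀ s, 0 ≤ ρ s)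
    (hP : IsTransition P) (s : S) : Summable fun n => discountedStateDist γ ρ P π n s := by
  refine Summable.of_nonneg_of_le (fun n => discountedStateDist_nonneg hγ0 hρ0 hP n s)
    (fun n => ?_) ((summable_geometric_of_lt_one hγ0 hγ1).mul_right (∑ s, ρ s))
  rw [← sum_discountedStateDist hP]
  exact Finset.single_le_sum (fun s' _ => discountedStateDist_nonneg hγ0 hρ0 hP n s')
    (Finset.mem_univ s)

theorem tsum_discountedStateDist (hγ0 : 0 ≤ γ) (hγ1 : γ < 1) (hρ0 : ∀ s, 0 ≤ ρ s)
    (hP : IsTransition P) (s : S) :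
    ∑' n, discountedStateDist γ ρ P π n s
      = ρ s + γ * ∑ s', (∑' n, discountedStateDist γ ρ P π n s') * P (s', π s', s) := by
  have hsum := summable_discountedStateDist (π := π) hγ0 hγ1 hρ0 hP
  rw [(hsum s).tsum_eq_zero_add]
  simp only [discountedStateDist, tsum_mul_left]
  rw [Summable.tsum_finsetSum fun s' _ => (hsum s').mul_right _]
  simp only [tsum_mul_right]

def occupancy [DecidableEq A] (γ : ℝ) (ρ : S → ℝ) (P : EuclideanSpace ℝ (S × A × S))
    (π : S → A) : EuclideanSpace ℝ (S × A) :=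
  WithLp.toLp 2 fun p => if p.2 = π p.1 then ∑' n, discountedStateDist γ ρ P π n p.1 else 0

theorem feasible_occupancy [DecidableEq A] (hγ0 : 0 ≤ γ) (hγ1 : γ < 1) (hρ0 : ∀ s, 0 ≤ ρ s)
    (hP : IsTransition P) : Feasible γ ρ P (occupancy γ ρ P π) := by
  refine ⟨fun s a => ?_, fun s => ?_⟩
  · simp only [occupancy]
    split_ifs
    · exact tsum_nonneg fun n => discountedStateDist_nonneg hγ0 hρ0 hP n s
    · exact le_rfl
  · simpa [occupancy, ite_mul] using tsum_discountedStateDist hγ0 hγ1 hρ0 hP s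

theorem inner_occupancy_eq_zero [DecidableEq A] {v : EuclideanSpace ℝ (S × A)}
    (hv : ∀ s, v (s, π s) = 0) : ⟪v, occupancy γ ρ P π⟫ = 0 := by
  rw [real_inner_eq_sum_mul]
  refine Finset.sum_eq_zero fun ⟨s, a⟩ _ => ?_
  simp only [occupancy]
  split_ifs with ha
  · rw [ha, hv, zero_mul]
  · exact mul_zero _

end Occupancy

section Compactness
variable {S A : Type*} [Fintype S] [Fintype A] {γ : ℝ} {ρ : S → ℝ}
  {P : EuclideanSpace ℝ (S × A × S)}

theorem sum_of_feasible (hγ1 : γ < 1) (hP : IsTransition P) {d : EuclideanSpace ℝ (S × A)}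
    (hd : Feasible γ ρ P d) : ∑ p, d p = (∑ s, ρ s) / (1 - γ) := by
  have hflow : ∑ s, ∑ s', ∑ a, d (s', a) * P (s', a, s) = ∑ p, d p := by
    rw [Finset.sum_comm, Fintype.sum_prod_type]
    refine Finset.sum_congr rfl fun s' _ => ?_
    rw [Finset.sum_comm]
    simp only [← Finset.mul_sum, hP.2, mul_one]
  have hmass : ∑ p, d p = ∑ s, ρ s + γ * ∑ p, d p :=
    calc ∑ p, d p = ∑ s, ∑ a, d (s, a) := Fintype.sum_prod_type _
      _ = ∑ s, (ρ s + γ * ∑ s', ∑ a, d (s', a) * P (s', a, s)) :=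
          Finset.sum_congr rfl fun s _ => hd.2 s
      _ = ∑ s, ρ s + γ * ∑ p, d p := by rw [Finset.sum_add_distrib, ← Finset.mul_sum, hflow]
  rw [eq_div_iff (by linarith)]
  linarith

theorem isCompact_setOf_feasible (hγ1 : γ < 1) (hP : IsTransition P) :
    IsCompact {d : EuclideanSpace ℝ (S × A) | Feasible γ ρ P d} := by
  refine Metric.isCompact_of_isClosed_isBounded ?_ ?_
  · simp only [Feasible, Set.ofPred_and, Set.ofPred_forall]
    refine (isClosed_iInter fun s => isClosed_iInter fun a => isClosed_le ?_ ?_).inter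
      (isClosed_iInter fun s => isClosed_eq ?_ ?_) <;> fun_prop
  · refine isBounded_iff_forall_norm_le.2 ⟨(∑ s, ρ s) / (1 - γ), fun d hd => ?_⟩
    have hnonneg : ∀ p ∈ Finset.univ, 0 ≤ d p := fun p _ => hd.1 p.1 p.2
    rw [← sum_of_feasible hγ1 hP hd, ← pow_le_pow_iff_left₀ (norm_nonneg d)
      (Finset.sum_nonneg hnonneg) two_ne_zero, EuclideanSpace.real_norm_sq_eq]
    exact Finset.sum_sq_le_sq_sum_of_nonneg hnonneg

theorem exists_isMaxOn_regObj [Nonempty A] (hγ0 : 0 ≤ γ) (hγ1 : γ < 1) (hρ0 : ∀ s, 0 ≤ ρ s)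
    (hP : IsTransition P) (lam : ℝ) (r : EuclideanSpace ℝ (S × A)) :
    ∃ dstar, Feasible γ ρ P dstar ∧ IsMaxOn (RegObj lam r) {d | Feasible γ ρ P d} dstar := by
  classical
  refine (isCompact_setOf_feasible hγ1 hP).exists_isMaxOn
    ⟨_, feasible_occupancy (π := fun _ => Classical.arbitrary A) hγ0 hγ1 hρ0 hP⟩ ?_
  simp only [funext (regObj_eq_inner lam r)]
  fun_prop

end Compactness

theorem regularized_rl_strong_duality_general
    {S A : Type*} [Fintype S] [Fintype A] [Nonempty A]
    (γ : ℝ) (hγ0 : 0 ≤ γ) (hγ1 : γ < 1)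
    (ρ : S → ℝ) (hρ0 : ∀ s, 0 ≤ ρ s)
    (P : EuclideanSpace ℝ (S × A × S)) (hP : IsTransition P)
    (r : EuclideanSpace ℝ (S × A))
    (lam : ℝ) (hlam : 0 < lam) :
    ∃ (dstar : EuclideanSpace ℝ (S × A)) (hstar : EuclideanSpace ℝ S),
      Feasible γ ρ P dstar ∧
      (∀ d : EuclideanSpace ℝ (S × A), Feasible γ ρ P d →
        RegObj lam r d ≤ RegObj lam r dstar) ∧
      (∀ h : EuclideanSpace ℝ S, DualFn γ ρ r P lam hstar ≤ DualFn γ ρ r P lam h) ∧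
      RegObj lam r dstar = DualFn γ ρ r P lam hstar := by
  classical
  obtain ⟨dstar, hdstar, hmax⟩ := exists_isMaxOn_regObj hγ0 hγ1 hρ0 hP lam r
  obtain ⟨h, hadv, π, hπ⟩ :=
    exists_advantage_nonpos_and_greedy hγ0 hγ1 hP (r - lam • dstar)
  have hslack := inner_advantage_eq_zero_of_isMaxOn hmax hdstar
    (feasible_occupancy hγ0 hγ1 hρ0 hP) hadv (inner_occupancy_eq_zero hπ)
  have hdual : DualFn γ ρ r P lam h ≤ RegObj lam r dstar :=
    lag_of_feasible r lam hdstar h ▸ dualFn_le_lag γ ρ r P hlam.le hadv hslack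
  exact ⟨dstar, h, hdstar, hmax, fun h' => hdual.trans (regObj_le_dualFn r hlam hdstar h'),
    (regObj_le_dualFn r hlam hdstar h).antisymm hdual⟩

/-- strong duality, with both optima attained:
`max_{d ∈ C(P)} (r·d − (λ/2)‖d‖²) = min_h max_{d ≥ 0} L_{r,P,λ}(d,h)`. -/
theorem regularized_rl_strong_duality
    {S A : Type*} [Fintype S] [Fintype A] [Nonempty S] [Nonempty A]
    (γ : ℝ) (hγ0 : 0 ≤ γ) (hγ1 : γ < 1)
    (ρ : S → ℝ) (hρ0 : ∀ s, 0 ≤ ρ s) (hρ1 : (∑ s, ρ s) = 1)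
    (P : EuclideanSpace ℝ (S × A × S)) (hP : IsTransition P)
    (r : EuclideanSpace ℝ (S × A))
    (lam : ℝ) (hlam : 0 < lam) :
    ∃ (dstar : EuclideanSpace ℝ (S × A)) (hstar : EuclideanSpace ℝ S),
      Feasible γ ρ P dstar ∧
      (∀ d : EuclideanSpace ℝ (S × A), Feasible γ ρ P d →
        RegObj lam r d ≤ RegObj lam r dstar) ∧
      (∀ h : EuclideanSpace ℝ S, DualFn γ ρ r P lam hstar ≤ DualFn γ ρ r P lam h) ∧
      RegObj lam r dstar = DualFn γ ρ r P lam hstar :=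
  regularized_rl_strong_duality_general γ hγ0 hγ1 ρ hρ0 P hP r lam hlam
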